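/- (Gauss equations.) Under the setup of a submanifold with potential of normals, the equality of mixed third partial derivatives of r implies, for all indices i,j,l,k and all u ∈ U: ∂a^k_{ij}/∂u^l − ∂a^k_{il}/∂u^j + Σ_s ( a^s_{ij} a^k_{sl} − a^s_{il} a^k_{sj} ) + Σ_s ( b^s_{ij} c^k_{sl} − b^s_{il} c^k_{sj} ) = 0. -/

import Mathlib

/-- Partial derivative in the `i`-th coordinate direction. -/
noncomputable def pd {N : ℕ} {E : Type*} [NormedAddCommGroup E] [NormedSpace ℝ E]
    (i : Fin N) (f : (Fin N → ℝ) → E) (u : Fin N → ℝ) : E :=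
  fderiv ℝ f u (Pi.single i 1)

/-- The pseudo-Euclidean scalar product `B(x,y) = xᵀ G y` on `ℝ^m`. -/
def Bform {m : ℕ} (G : Matrix (Fin m) (Fin m) ℝ) (x y : Fin m → ℝ) : ℝ :=
  ∑ i, ∑ j, x i * G i j * y j

section aux
variable {N : ℕ} {E : Type*} [NormedAddCommGroup E] [NormedSpace ℝ E]
  {U : Set (Fin N → ℝ)} {u : Fin N → ℝ}

lemma pd_congr_set (hU : IsOpen U) {f g : (Fin N → ℝ) → E}
    (h : ∀ x ∈ U, f x = g x) (hu : u ∈ U) (i : Fin N) :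
    pd i f u = pd i g u := by
  unfold pd
  rw [Filter.EventuallyEq.fderiv_eq (Filter.eventuallyEq_of_mem (hU.mem_nhds hu) h)]

lemma contDiffOn_pd (hU : IsOpen U) {f : (Fin N → ℝ) → E}
    (hf : ContDiffOn ℝ (⊤ : ℕ∞) f U) (i : Fin N) : ContDiffOn ℝ (⊤ : ℕ∞) (pd i f) U := by
  have h1 : ContDiffOn ℝ (⊤ : ℕ∞) (fun x => fderiv ℝ f x) U :=
    hf.fderiv_of_isOpen hU (by simp)
  exact h1.clm_apply contDiffOn_const

lemma diffAt_pd (hU : IsOpen U) {f : (Fin N → ℝ) → E}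
    (hf : ContDiffOn ℝ (⊤ : ℕ∞) f U) (i : Fin N) (hu : u ∈ U) :
    DifferentiableAt ℝ (pd i f) u :=
  ((contDiffOn_pd hU hf i).differentiableOn (by simp)).differentiableAt (hU.mem_nhds hu)

lemma pd_comm (hU : IsOpen U) {f : (Fin N → ℝ) → E}
    (hf : ContDiffOn ℝ (⊤ : ℕ∞) f U) (hu : u ∈ U) (i j : Fin N) :
    pd i (pd j f) u = pd j (pd i f) u := by
  have hd : DifferentiableAt ℝ (fun x => fderiv ℝ f x) u :=
    (((hf.fderiv_of_isOpen (m := ((⊤ : ℕ∞) : WithTop ℕ∞)) hU (by simp)).differentiableOn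
      (by simp : ((⊤ : ℕ∞) : WithTop ℕ∞) ≠ 0)).differentiableAt (hU.mem_nhds hu))
  have hsymm : IsSymmSndFDerivAt ℝ f u :=
    (hf.contDiffAt (hU.mem_nhds hu)).isSymmSndFDerivAt (by rw [minSmoothness_of_isRCLikeNormedField]; exact WithTop.coe_le_coe.mpr (le_top : (2 : ℕ∞) ≤ ⊤))
  unfold pd
  rw [fderiv_clm_apply hd (differentiableAt_const _),
      fderiv_clm_apply hd (differentiableAt_const _)]
  simp only [fderiv_const, fderiv_fun_const, Pi.zero_apply, ContinuousLinearMap.comp_zero, zero_add,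
    ContinuousLinearMap.add_apply, ContinuousLinearMap.flip_apply]
  exact hsymm _ _

lemma pd_smul (i : Fin N) {f : (Fin N → ℝ) → ℝ} {g : (Fin N → ℝ) → E}
    (hf : DifferentiableAt ℝ f u) (hg : DifferentiableAt ℝ g u) :
    pd i (fun x => f x • g x) u = pd i f u • g u + f u • pd i g u := by
  unfold pd
  rw [fderiv_fun_smul hf hg]
  simp [add_comm]

lemma pd_sum {ι : Type*} (i : Fin N) (s : Finset ι) {f : ι → (Fin N → ℝ) → E}
    (h : ∀ k ∈ s, DifferentiableAt ℝ (f k) u) :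
    pd i (fun x => ∑ k ∈ s, f k x) u = ∑ k ∈ s, pd i (f k) u := by
  unfold pd
  rw [fderiv_fun_sum h]
  simp

lemma pd_add (i : Fin N) {f g : (Fin N → ℝ) → E}
    (hf : DifferentiableAt ℝ f u) (hg : DifferentiableAt ℝ g u) :
    pd i (fun x => f x + g x) u = pd i f u + pd i g u := by
  unfold pd
  rw [fderiv_fun_add hf hg]
  simp

end aux

/-- `X^k_{ij}` is written `X i j k`.  Gauss equations. -/
theorem stmt10
    (N : ℕ) (hN : 1 ≤ N)
    (G : Matrix (Fin (2 * N)) (Fin (2 * N)) ℝ)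
    (hGsymm : G.transpose = G) (hGdet : G.det ≠ 0)
    (U : Set (Fin N → ℝ)) (hU : IsOpen U)
    (r n : (Fin N → ℝ) → (Fin (2 * N) → ℝ))
    (hr : ContDiffOn ℝ (⊤ : ℕ∞) r U) (hn : ContDiffOn ℝ (⊤ : ℕ∞) n U)
    (hbasis : ∀ u ∈ U,
      LinearIndependent ℝ (Sum.elim (fun i : Fin N => pd i r u) (fun j : Fin N => pd j n u)) ∧
      Submodule.span ℝ
        (Set.range (Sum.elim (fun i : Fin N => pd i r u) (fun j : Fin N => pd j n u))) = ⊤)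
    (horth : ∀ u ∈ U, ∀ i j : Fin N, Bform G (pd i r u) (pd j n u) = 0)
    (a b c d : Fin N → Fin N → Fin N → (Fin N → ℝ) → ℝ)
    (hsmooth : ∀ i j k : Fin N,
      ContDiffOn ℝ (⊤ : ℕ∞) (a i j k) U ∧ ContDiffOn ℝ (⊤ : ℕ∞) (b i j k) U ∧
      ContDiffOn ℝ (⊤ : ℕ∞) (c i j k) U ∧ ContDiffOn ℝ (⊤ : ℕ∞) (d i j k) U)
    (hGauss : ∀ u ∈ U, ∀ i j : Fin N,
      pd i (pd j r) u =
        (∑ k, a i j k u • pd k r u) + ∑ k, b i j k u • pd k n u)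
    (hWeingarten : ∀ u ∈ U, ∀ i j : Fin N,
      pd i (pd j n) u =
        (∑ k, c i j k u • pd k r u) + ∑ k, d i j k u • pd k n u) :
    ∀ u ∈ U, ∀ i j l k : Fin N,
      pd l (a i j k) u - pd j (a i l k) u
        + (∑ s, (a i j s u * a s l k u - a i l s u * a s j k u))
        + (∑ s, (b i j s u * c s l k u - b i l s u * c s j k u)) = 0 := by
  intro u hu i j l k
  have hdr : ∀ s : Fin N, DifferentiableAt ℝ (pd s r) u := fun s => diffAt_pd hU hr s hu
  have hdn : ∀ s : Fin N, DifferentiableAt ℝ (pd s n) u := fun s => diffAt_pd hU hn s hu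
  have hda : ∀ p q s : Fin N, DifferentiableAt ℝ (a p q s) u := fun p q s =>
    (((hsmooth p q s).1).differentiableOn (by simp)).differentiableAt (hU.mem_nhds hu)
  have hdb : ∀ p q s : Fin N, DifferentiableAt ℝ (b p q s) u := fun p q s =>
    (((hsmooth p q s).2.1).differentiableOn (by simp)).differentiableAt (hU.mem_nhds hu)
  -- Expansion of the third derivative in the moving frame
  have expand : ∀ j' l' : Fin N,
      pd l' (pd i (pd j' r)) u =
        (∑ k', (pd l' (a i j' k') u + ((∑ s, a i j' s u * a s l' k' u)
          + ∑ s, b i j' s u * c s l' k' u)) • pd k' r u)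
        + ∑ k', (pd l' (b i j' k') u + ((∑ s, a i j' s u * b s l' k' u)
          + ∑ s, b i j' s u * d s l' k' u)) • pd k' n u := by
    intro j' l'
    have h1 : pd l' (pd i (pd j' r)) u
        = pd l' (fun x => (∑ k', a i j' k' x • pd k' r x) + ∑ k', b i j' k' x • pd k' n x) u :=
      pd_congr_set hU (fun x hx => hGauss x hx i j') hu l'
    have hd1 : ∀ k' : Fin N, DifferentiableAt ℝ (fun x => a i j' k' x • pd k' r x) u :=
      fun k' => (hda i j' k').smul (hdr k')
    have hd2 : ∀ k' : Fin N, DifferentiableAt ℝ (fun x => b i j' k' x • pd k' n x) u :=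
      fun k' => (hdb i j' k').smul (hdn k')
    rw [h1, pd_add l' (DifferentiableAt.fun_sum fun k' _ => hd1 k')
        (DifferentiableAt.fun_sum fun k' _ => hd2 k'),
      pd_sum l' _ (fun k' _ => hd1 k'), pd_sum l' _ (fun k' _ => hd2 k')]
    have e1 : ∀ k' : Fin N, pd l' (fun x => a i j' k' x • pd k' r x) u
        = pd l' (a i j' k') u • pd k' r u
          + a i j' k' u • ((∑ t, a k' l' t u • pd t r u) + ∑ t, b k' l' t u • pd t n u) := by
      intro k'
      rw [pd_smul l' (hda i j' k') (hdr k'), pd_comm hU hr hu l' k', hGauss u hu k' l']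
    have e2 : ∀ k' : Fin N, pd l' (fun x => b i j' k' x • pd k' n x) u
        = pd l' (b i j' k') u • pd k' n u
          + b i j' k' u • ((∑ t, c k' l' t u • pd t r u) + ∑ t, d k' l' t u • pd t n u) := by
      intro k'
      rw [pd_smul l' (hdb i j' k') (hdn k'), pd_comm hU hn hu l' k', hWeingarten u hu k' l']
    rw [Finset.sum_congr rfl (fun k' _ => e1 k'), Finset.sum_congr rfl (fun k' _ => e2 k')]
    simp only [smul_add, Finset.smul_sum, smul_smul, Finset.sum_add_distrib, add_smul,
      Finset.sum_smul]
    rw [show (∑ x : Fin N, ∑ y : Fin N, (a i j' x u * a x l' y u) • pd y r u)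
          = ∑ y : Fin N, ∑ x : Fin N, (a i j' x u * a x l' y u) • pd y r u from Finset.sum_comm,
        show (∑ x : Fin N, ∑ y : Fin N, (a i j' x u * b x l' y u) • pd y n u)
          = ∑ y : Fin N, ∑ x : Fin N, (a i j' x u * b x l' y u) • pd y n u from Finset.sum_comm,
        show (∑ x : Fin N, ∑ y : Fin N, (b i j' x u * c x l' y u) • pd y r u)
          = ∑ y : Fin N, ∑ x : Fin N, (b i j' x u * c x l' y u) • pd y r u from Finset.sum_comm,
        show (∑ x : Fin N, ∑ y : Fin N, (b i j' x u * d x l' y u) • pd y n u)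
          = ∑ y : Fin N, ∑ x : Fin N, (b i j' x u * d x l' y u) • pd y n u from Finset.sum_comm]
    abel
  -- symmetry of third derivatives
  have schwarz3 : pd l (pd i (pd j r)) u = pd j (pd i (pd l r)) u := by
    have h1 : pd l (pd i (pd j r)) u = pd l (pd j (pd i r)) u :=
      pd_congr_set hU (fun x hx => pd_comm hU hr hx i j) hu l
    have h2 : pd l (pd j (pd i r)) u = pd j (pd l (pd i r)) u :=
      pd_comm hU (contDiffOn_pd hU hr i) hu l j
    have h3 : pd j (pd l (pd i r)) u = pd j (pd i (pd l r)) u :=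
      pd_congr_set hU (fun x hx => pd_comm hU hr hx l i) hu j
    rw [h1, h2, h3]
  set P : Fin N → ℝ := fun k' => pd l (a i j k') u + ((∑ s, a i j s u * a s l k' u)
    + ∑ s, b i j s u * c s l k' u) with hP
  set P' : Fin N → ℝ := fun k' => pd j (a i l k') u + ((∑ s, a i l s u * a s j k' u)
    + ∑ s, b i l s u * c s j k' u) with hP'
  set Q : Fin N → ℝ := fun k' => pd l (b i j k') u + ((∑ s, a i j s u * b s l k' u)
    + ∑ s, b i j s u * d s l k' u) with hQ
  set Q' : Fin N → ℝ := fun k' => pd j (b i l k') u + ((∑ s, a i l s u * b s j k' u)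
    + ∑ s, b i l s u * d s j k' u) with hQ'
  have key : (∑ k', P k' • pd k' r u) + ∑ k', Q k' • pd k' n u
      = (∑ k', P' k' • pd k' r u) + ∑ k', Q' k' • pd k' n u :=
    (expand j l).symm.trans (schwarz3.trans (expand l j))
  have hzero : (∑ k', (P k' - P' k') • pd k' r u) + ∑ k', (Q k' - Q' k') • pd k' n u = 0 := by
    simp only [sub_smul, Finset.sum_sub_distrib]
    rw [sub_add_sub_comm, key, sub_self]
  have hli := (hbasis u hu).1
  rw [Fintype.linearIndependent_iff] at hli
  have hcoef := hli (Sum.elim (fun k' => P k' - P' k') (fun k' => Q k' - Q' k'))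
    (by rw [Fintype.sum_sum_type]; simpa using hzero) (Sum.inl k)
  simp only [Sum.elim_inl] at hcoef
  have hPk : P k = P' k := by linarith
  rw [hP, hP'] at hPk
  simp only at hPk
  rw [Finset.sum_sub_distrib, Finset.sum_sub_distrib]
  linarith
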